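/- Let g : ℝ → ℝ be convex and differentiable, and let D(a,y) = g(y) − g(a) − (deriv g a)·(y − a). Let μ be the joint law of (Φ, Y) on A × ℝ (A a standard Borel space) with Y integrable and g(Y) integrable under μ, let h*(φ) = E_μ[Y | Φ = φ], and let q be any probability measure on a standard Borel space B. Then for every measurable h : A × B → ℝ with the losses below integrable, ∫_B ∫_{A×ℝ} D(h(φ,ψ), y) dμ(φ,y) dq(ψ) ≥ ∫_{A×ℝ} D(h*(φ), y) dμ(φ,y); that is, on a product environment in which Ψ is independent of (Φ, Y) with law q, every predictor using (Φ, Ψ) incurs at least the expected Bregman loss of the invariant predictor h*(Φ). -/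
import Mathlib


open MeasureTheory ProbabilityTheory Filter

/-- The Bregman loss associated with a differentiable function `g : ℝ → ℝ`:
`D(a, y) = g(y) - g(a) - g'(a) * (y - a)`. -/
noncomputable def bregmanLoss (g : ℝ → ℝ) (a y : ℝ) : ℝ :=
  g y - g a - deriv g a * (y - a)

lemma bregmanLoss_nonneg (g : ℝ → ℝ) (hg_convex : ConvexOn ℝ Set.univ g)
    (hg_diff : Differentiable ℝ g) (a y : ℝ) : 0 ≤ bregmanLoss g a y := by
  unfold bregmanLoss
  rcases lt_trichotomy a y with hlt | rfl | hlt
  · have := hg_convex.deriv_le_slope (Set.mem_univ a) (Set.mem_univ y) hlt (hg_diff a)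
    rw [slope_def_field, le_div_iff₀ (by linarith)] at this
    linarith
  · simp
  · have := hg_convex.slope_le_deriv (Set.mem_univ y) (Set.mem_univ a) hlt (hg_diff a)
    rw [slope_def_field, div_le_iff₀ (by linarith)] at this
    linarith

lemma bregman_core {A : Type*} [MeasurableSpace A]
    (g : ℝ → ℝ) (hg_convex : ConvexOn ℝ Set.univ g) (hg_diff : Differentiable ℝ g)
    (μ : Measure (A × ℝ)) [IsProbabilityMeasure μ]
    (hY_int : Integrable (fun p : A × ℝ => p.2) μ)
    (hstar : A → ℝ) (hstar_meas : Measurable hstar)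
    (hstar_ce : (fun p : A × ℝ => hstar p.1)
      =ᵐ[μ] μ[(fun p : A × ℝ => p.2) | MeasurableSpace.comap Prod.fst inferInstance])
    (hstar_int : Integrable (fun p : A × ℝ => bregmanLoss g (hstar p.1) p.2) μ)
    (f : A → ℝ) (f_meas : Measurable f)
    (f_int : Integrable (fun p : A × ℝ => bregmanLoss g (f p.1) p.2) μ) :
    ∫ p, bregmanLoss g (hstar p.1) p.2 ∂μ ≤ ∫ p, bregmanLoss g (f p.1) p.2 ∂μ := by
  have hm : MeasurableSpace.comap (Prod.fst : A × ℝ → A) inferInstance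
      ≤ (inferInstance : MeasurableSpace (A × ℝ)) := measurable_fst.comap_le
  haveI : IsFiniteMeasure (μ.trim hm) := isFiniteMeasure_trim hm
  haveI : SigmaFinite (μ.trim hm) := inferInstance
  -- key objects
  set w : A → ℝ := fun a => deriv g (hstar a) - deriv g (f a) with hw_def
  have hw_meas : Measurable w :=
    ((measurable_deriv g).comp hstar_meas).sub ((measurable_deriv g).comp f_meas)
  set M : A × ℝ → ℝ := fun p => bregmanLoss g (f p.1) p.2 - bregmanLoss g (hstar p.1) p.2
    with hM_def
  set Z : A × ℝ → ℝ := fun p => p.2 - hstar p.1 with hZ_def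
  set F : A × ℝ → ℝ := fun p => bregmanLoss g (f p.1) (hstar p.1) with hF_def
  have hM_int : Integrable M μ := f_int.sub hstar_int
  have hstar_fst_int : Integrable (fun p : A × ℝ => hstar p.1) μ :=
    integrable_condExp.congr hstar_ce.symm
  have hZ_int : Integrable Z μ := hY_int.sub hstar_fst_int
  have hMFWZ : ∀ p : A × ℝ, M p = F p + w p.1 * Z p := by
    intro p
    simp only [hM_def, hF_def, hZ_def, hw_def, bregmanLoss]
    ring
  -- for each n, the truncated multiplier integrates against Z to 0
  have hkey : ∀ n : ℕ, 0 ≤ ∫ p, Set.indicator {p : A × ℝ | |w p.1| ≤ n} M p ∂μ := by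
    intro n
    set c₀ : A → ℝ := fun a => if |w a| ≤ n then w a else 0 with hc₀_def
    have hc₀_meas : Measurable c₀ :=
      Measurable.ite (measurableSet_le (hw_meas.abs) measurable_const) hw_meas measurable_const
    have hc₀_bdd : ∀ a, ‖c₀ a‖ ≤ n := by
      intro a
      simp only [hc₀_def]
      split_ifs with hcase
      · simpa [Real.norm_eq_abs] using hcase
      · simp
    set c : A × ℝ → ℝ := fun p => c₀ p.1 with hc_def
    have hfst_m : @Measurable (A × ℝ) A (MeasurableSpace.comap (Prod.fst : A × ℝ → A) inferInstance) _ Prod.fst := Measurable.of_comap_le le_rfl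
    have hc_sm : StronglyMeasurable[MeasurableSpace.comap (Prod.fst : A × ℝ → A) inferInstance] c := (hc₀_meas.comp hfst_m).stronglyMeasurable
    have hc_meas : Measurable c := hc₀_meas.comp measurable_fst
    have hc_bdd : ∀ᵐ p ∂μ, ‖c p‖ ≤ (n : ℝ) := Eventually.of_forall fun p => hc₀_bdd p.1
    -- ∫ c * Y = ∫ c * hstar∘fst
    have hcY_int : Integrable (fun p : A × ℝ => c p * p.2) μ :=
      hY_int.bdd_mul hc_meas.aestronglyMeasurable hc_bdd
    have hcH_int : Integrable (fun p : A × ℝ => c p * hstar p.1) μ :=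
      hstar_fst_int.bdd_mul hc_meas.aestronglyMeasurable hc_bdd
    have hpull := condExp_mul_of_stronglyMeasurable_left (μ := μ) hc_sm
      (f := c) (g := fun p : A × ℝ => p.2) hcY_int hY_int
    have hcZ_zero : ∫ p, c p * Z p ∂μ = 0 := by
      have h1 : ∫ p, c p * p.2 ∂μ = ∫ p, (μ[(fun p : A × ℝ => p.2)|MeasurableSpace.comap (Prod.fst : A × ℝ → A) inferInstance]) p * c p ∂μ := by
        rw [← integral_condExp hm (f := fun p : A × ℝ => c p * p.2)]
        refine integral_congr_ae (hpull.trans ?_)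
        filter_upwards with p using mul_comm _ _
      have h2 : ∫ p, (μ[(fun p : A × ℝ => p.2)|MeasurableSpace.comap (Prod.fst : A × ℝ → A) inferInstance]) p * c p ∂μ
          = ∫ p, c p * hstar p.1 ∂μ := by
        refine integral_congr_ae ?_
        filter_upwards [hstar_ce] with p hp
        rw [← hp, mul_comm]
      have h3 : ∫ p, c p * Z p ∂μ = ∫ p, c p * p.2 ∂μ - ∫ p, c p * hstar p.1 ∂μ := by
        rw [← integral_sub hcY_int hcH_int]
        refine integral_congr_ae ?_
        filter_upwards with p
        simp only [hZ_def]
        ring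
      rw [h3, h1, h2, sub_self]
    -- indicator identity
    have hind : ∀ p : A × ℝ, Set.indicator {p : A × ℝ | |w p.1| ≤ n} M p
        = Set.indicator {p : A × ℝ | |w p.1| ≤ n} F p + c p * Z p := by
      intro p
      by_cases hp : |w p.1| ≤ (n : ℝ)
      · have hpmem : p ∈ {p : A × ℝ | |w p.1| ≤ (n : ℝ)} := hp
        rw [Set.indicator_of_mem hpmem, Set.indicator_of_mem hpmem, hMFWZ p]
        simp only [hc_def, hc₀_def, if_pos hp]
      · have hpmem : p ∉ {p : A × ℝ | |w p.1| ≤ (n : ℝ)} := hp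
        rw [Set.indicator_of_notMem hpmem, Set.indicator_of_notMem hpmem]
        simp only [hc_def, hc₀_def, if_neg hp]
        ring
    have hS_meas : MeasurableSet {p : A × ℝ | |w p.1| ≤ (n : ℝ)} :=
      measurableSet_le ((hw_meas.comp measurable_fst).abs) measurable_const
    have hcZ_int : Integrable (fun p => c p * Z p) μ :=
      hZ_int.bdd_mul hc_meas.aestronglyMeasurable hc_bdd
    have hindM_int : Integrable (Set.indicator {p : A × ℝ | |w p.1| ≤ n} M) μ :=
      hM_int.indicator hS_meas
    have hindF_int : Integrable (Set.indicator {p : A × ℝ | |w p.1| ≤ n} F) μ := by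
      have : (Set.indicator {p : A × ℝ | |w p.1| ≤ n} F)
          = fun p => Set.indicator {p : A × ℝ | |w p.1| ≤ n} M p - c p * Z p := by
        funext p
        rw [hind p]; ring
      rw [this]
      exact hindM_int.sub hcZ_int
    calc (0 : ℝ) ≤ ∫ p, Set.indicator {p : A × ℝ | |w p.1| ≤ n} F p ∂μ := by
          refine integral_nonneg fun p => ?_
          exact Set.indicator_nonneg
            (fun p _ => bregmanLoss_nonneg g hg_convex hg_diff _ _) p
      _ = ∫ p, Set.indicator {p : A × ℝ | |w p.1| ≤ n} F p ∂μ + ∫ p, c p * Z p ∂μ := by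
          rw [hcZ_zero, add_zero]
      _ = ∫ p, Set.indicator {p : A × ℝ | |w p.1| ≤ n} M p ∂μ := by
          rw [← integral_add hindF_int hcZ_int]
          exact integral_congr_ae (Eventually.of_forall fun p => (hind p).symm)
  -- pass to the limit
  have htend : Tendsto (fun n : ℕ => ∫ p, Set.indicator {p : A × ℝ | |w p.1| ≤ n} M p ∂μ)
      atTop (nhds (∫ p, M p ∂μ)) := by
    refine tendsto_integral_of_dominated_convergence (fun p => |M p|) ?_ ?_ ?_ ?_
    · intro n
      exact (hM_int.indicator (measurableSet_le ((hw_meas.comp measurable_fst).abs)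
        measurable_const)).aestronglyMeasurable
    · simpa [Real.norm_eq_abs] using hM_int.norm
    · intro n
      filter_upwards with p
      simpa [Real.norm_eq_abs] using
        norm_indicator_le_norm_self (s := {p : A × ℝ | |w p.1| ≤ (n : ℝ)}) (f := M) (a := p)
    · filter_upwards with p
      refine tendsto_const_nhds.congr' ?_
      filter_upwards [eventually_ge_atTop ⌈|w p.1|⌉₊] with n hn
      have hle : |w p.1| ≤ (n : ℝ) := le_trans (Nat.le_ceil _) (Nat.cast_le.mpr hn)
      exact (Set.indicator_of_mem (show p ∈ {p : A × ℝ | |w p.1| ≤ (n : ℝ)} from hle) M).symm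
  have hM_nonneg : 0 ≤ ∫ p, M p ∂μ := ge_of_tendsto' htend hkey
  have : ∫ p, M p ∂μ
      = ∫ p, bregmanLoss g (f p.1) p.2 ∂μ - ∫ p, bregmanLoss g (hstar p.1) p.2 ∂μ :=
    integral_sub f_int hstar_int
  linarith

/-- On a product environment in which the variant covariate `Ψ` (with law `q` on `B`) is
independent of `(Φ, Y)` (with joint law `μ` on `A × ℝ`), every measurable predictor
`h : A × B → ℝ` incurs at least the expected Bregman loss of the invariant predictor
`hstar = E_μ[Y | Φ]`:
`∫_B ∫_{A×ℝ} D(h(φ,ψ), y) dμ(φ,y) dq(ψ) ≥ ∫_{A×ℝ} D(hstar(φ), y) dμ(φ,y)`. -/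
theorem invariant_predictor_optimal_on_product {A B : Type*}
    [MeasurableSpace A] [StandardBorelSpace A]
    [MeasurableSpace B] [StandardBorelSpace B]
    (g : ℝ → ℝ) (hg_convex : ConvexOn ℝ Set.univ g) (hg_diff : Differentiable ℝ g)
    (μ : Measure (A × ℝ)) [IsProbabilityMeasure μ]
    (hY_int : Integrable (fun p : A × ℝ => p.2) μ)
    (hgY_int : Integrable (fun p : A × ℝ => g p.2) μ)
    (hstar : A → ℝ) (hstar_meas : Measurable hstar)
    (hstar_ce : (fun p : A × ℝ => hstar p.1)
      =ᵐ[μ] μ[(fun p : A × ℝ => p.2) | MeasurableSpace.comap Prod.fst inferInstance])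
    (q : Measure B) [IsProbabilityMeasure q]
    (h : A × B → ℝ) (h_meas : Measurable h)
    (h_int : Integrable (fun x : (A × ℝ) × B => bregmanLoss g (h (x.1.1, x.2)) x.1.2) (μ.prod q))
    (hstar_int : Integrable (fun p : A × ℝ => bregmanLoss g (hstar p.1) p.2) μ) :
    ∫ p, bregmanLoss g (hstar p.1) p.2 ∂μ
      ≤ ∫ ψ, ∫ p, bregmanLoss g (h (p.1, ψ)) p.2 ∂μ ∂q := by
  have step1 : ∀ᵐ ψ ∂q, Integrable (fun p : A × ℝ => bregmanLoss g (h (p.1, ψ)) p.2) μ :=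
    h_int.prod_left_ae
  have step2 : ∀ᵐ ψ ∂q, ∫ p, bregmanLoss g (hstar p.1) p.2 ∂μ
      ≤ ∫ p, bregmanLoss g (h (p.1, ψ)) p.2 ∂μ := by
    filter_upwards [step1] with ψ hψ
    exact bregman_core g hg_convex hg_diff μ hY_int hstar hstar_meas hstar_ce hstar_int
      (fun a => h (a, ψ)) (h_meas.comp (measurable_id.prodMk measurable_const)) hψ
  have step3 : Integrable (fun ψ => ∫ p, bregmanLoss g (h (p.1, ψ)) p.2 ∂μ) q :=
    h_int.integral_prod_right
  calc ∫ p, bregmanLoss g (hstar p.1) p.2 ∂μ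
      = ∫ _ψ, (∫ p, bregmanLoss g (hstar p.1) p.2 ∂μ) ∂q := by simp
    _ ≤ _ := integral_mono_ae (integrable_const _) step3 step2
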